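/- The improper integral ∫_{ℝ²} ( |y|^{2+2α}/4 ) e^{U(y)} f(y) dy converges and equals 2π Λ₁, where Λ₁ = −( π / ( V₀ sin(π/(1+α)) (1+α) ) ) · ( 8(1+α)²/V₀ )^{1/(1+α)}. -/

import Mathlib

/-!
In polar coordinates and after the substitutions `x = r ^ (2 + 2α)`, `u = a x`, the integral
becomes `(π / (4 (1 + α) a ^ (β + 1))) ∫₀^∞ u ^ β (1 - u) / (1 + u) ^ 3 du`
with `β = 1 / (1 + α)`.
Since `(1 - u) / (1 + u) ^ 3 = 2 / (1 + u) ^ 3 - 1 / (1 + u) ^ 2`, the last integral is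
`2 B(β + 1, 2 - β) - B(β + 1, 1 - β) = -β ^ 2 Γ(β) Γ(1 - β) = -β ^ 2 π / sin (π β)`,
where `B(p, q) = ∫₀^∞ x ^ (p - 1) (1 + x) ^ (-(p + q)) dx` is reduced to Euler's integral on
`(0, 1)` by `t = x / (1 + x)`.
-/

open MeasureTheory Metric Real Filter

noncomputable section

/-- `ℝ²`, realized as the Euclidean space on `Fin 2`. -/
abbrev R2 : Type := EuclideanSpace ℝ (Fin 2)

/-- `a = V₀/(8(1+α)²)`. -/
def aconst (α V0 : ℝ) : ℝ := V0 / (8 * (1 + α) ^ 2)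

/-- `U(y) = -2 log(1 + a|y|^{2α+2})`. -/
def U2 (α V0 : ℝ) (y : R2) : ℝ := -2 * Real.log (1 + aconst α V0 * ‖y‖ ^ (2 * α + 2))

/-- `f(y) = (1 - a|y|^{2α+2})/(1 + a|y|^{2α+2})`. -/
def f2 (α V0 : ℝ) (y : R2) : ℝ :=
  (1 - aconst α V0 * ‖y‖ ^ (2 * α + 2)) / (1 + aconst α V0 * ‖y‖ ^ (2 * α + 2))

/-- The constant `Λ₁`. -/
def Lam1 (α V0 : ℝ) : ℝ :=
  -(π / (V0 * Real.sin (π / (1 + α)) * (1 + α))) *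
    (8 * (1 + α) ^ 2 / V0) ^ ((1 : ℝ) / (1 + α))

open Set

section Beta

variable {p q : ℝ}

lemma ofReal_rpow_mul_one_sub_rpow {t : ℝ} (ht : t ∈ Icc (0 : ℝ) 1) :
    ((t ^ (p - 1) * (1 - t) ^ (q - 1) : ℝ) : ℂ)
      = (t : ℂ) ^ ((p : ℂ) - 1) * (1 - (t : ℂ)) ^ ((q : ℂ) - 1) := by
  push_cast [Complex.ofReal_cpow ht.1, Complex.ofReal_cpow (sub_nonneg.2 ht.2)]
  rfl

lemma integrableOn_rpow_mul_one_sub_rpow (hp : 0 < p) (hq : 0 < q) :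
    IntegrableOn (fun t : ℝ => t ^ (p - 1) * (1 - t) ^ (q - 1)) (Ioo 0 1) := by
  have h := (intervalIntegrable_iff_integrableOn_Ioc_of_le zero_le_one).1
    (Complex.betaIntegral_convergent (u := p) (v := q) (by simpa) (by simpa))
  refine (IntegrableOn.congr_fun h.re (fun t ht => ?_) measurableSet_Ioc).mono_set
    Ioo_subset_Ioc_self
  simp [← ofReal_rpow_mul_one_sub_rpow (Ioc_subset_Icc_self ht)]

lemma integral_rpow_mul_one_sub_rpow (hp : 0 < p) (hq : 0 < q) :
    ∫ t in Ioo (0 : ℝ) 1, t ^ (p - 1) * (1 - t) ^ (q - 1)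
      = Gamma p * Gamma q / Gamma (p + q) := by
  have h := Complex.betaIntegral_eq_Gamma_mul_div p q (by simpa) (by simpa)
  rw [Complex.betaIntegral, intervalIntegral.integral_of_le zero_le_one,
    ← setIntegral_congr_fun measurableSet_Ioc
      (fun t ht => ofReal_rpow_mul_one_sub_rpow (p := p) (q := q) (Ioc_subset_Icc_self ht)),
    integral_complex_ofReal, integral_Ioc_eq_integral_Ioo, ← Complex.ofReal_add,
    Complex.Gamma_ofReal, Complex.Gamma_ofReal, Complex.Gamma_ofReal] at h
  exact_mod_cast h

lemma image_div_one_add_Ioi : (fun x : ℝ => x / (1 + x)) '' Ioi 0 = Ioo 0 1 := by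
  ext t
  constructor
  · rintro ⟨x, hx, rfl⟩
    have hx : (0 : ℝ) < x := hx
    exact ⟨by positivity, (div_lt_one (by positivity)).2 (by linarith)⟩
  · rintro ⟨ht0, ht1⟩
    refine ⟨t / (1 - t), div_pos ht0 (by linarith), ?_⟩
    have : (1 : ℝ) - t ≠ 0 := by linarith
    field_simp
    ring

lemma injOn_div_one_add : InjOn (fun x : ℝ => x / (1 + x)) (Ioi 0) := by
  intro x hx y hy hxy
  have hx : (0 : ℝ) < x := hx
  have hy : (0 : ℝ) < y := hy
  field_simp at hxy
  linarith

lemma hasDerivAt_div_one_add {x : ℝ} (hx : 0 < x) :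
    HasDerivAt (fun x : ℝ => x / (1 + x)) ((1 + x) ^ 2)⁻¹ x := by
  have h := (hasDerivAt_id' x).div ((hasDerivAt_id' x).const_add 1) (by positivity)
  exact h.congr_deriv (by ring)

lemma abs_deriv_smul_comp_div_one_add {x : ℝ} (hx : 0 < x) :
    |((1 + x) ^ 2)⁻¹| • ((x / (1 + x)) ^ (p - 1) * (1 - x / (1 + x)) ^ (q - 1))
      = x ^ (p - 1) * (1 + x) ^ (-(p + q)) := by
  have h1x : 0 < 1 + x := by linarith
  have hsub : 1 - x / (1 + x) = (1 + x)⁻¹ := by field_simp; ring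
  have hexp : (1 + x) ^ (-(p + q))
      = ((1 + x) ^ 2)⁻¹ * ((1 + x) ^ (p - 1))⁻¹ * ((1 + x) ^ (q - 1))⁻¹ := by
    rw [← rpow_natCast, ← rpow_neg h1x.le, ← rpow_neg h1x.le, ← rpow_neg h1x.le,
      ← rpow_add h1x, ← rpow_add h1x]
    congr 1
    push_cast
    ring
  rw [hsub, hexp, abs_of_pos (by positivity), smul_eq_mul, div_rpow hx.le h1x.le, inv_rpow h1x.le]
  ring

lemma integrableOn_Ioi_rpow_mul_one_add_rpow_neg (hp : 0 < p) (hq : 0 < q) :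
    IntegrableOn (fun x : ℝ => x ^ (p - 1) * (1 + x) ^ (-(p + q))) (Ioi 0) := by
  have h := integrableOn_image_iff_integrableOn_abs_deriv_smul measurableSet_Ioi
    (fun x hx => (hasDerivAt_div_one_add hx).hasDerivWithinAt) injOn_div_one_add
    (fun t : ℝ => t ^ (p - 1) * (1 - t) ^ (q - 1))
  rw [image_div_one_add_Ioi] at h
  exact (h.1 (integrableOn_rpow_mul_one_sub_rpow hp hq)).congr_fun
    (fun x hx => abs_deriv_smul_comp_div_one_add hx) measurableSet_Ioi

lemma integral_Ioi_rpow_mul_one_add_rpow_neg (hp : 0 < p) (hq : 0 < q) :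
    ∫ x in Ioi (0 : ℝ), x ^ (p - 1) * (1 + x) ^ (-(p + q))
      = Gamma p * Gamma q / Gamma (p + q) := by
  have h := integral_image_eq_integral_abs_deriv_smul measurableSet_Ioi
    (fun x hx => (hasDerivAt_div_one_add hx).hasDerivWithinAt) injOn_div_one_add
    (fun t : ℝ => t ^ (p - 1) * (1 - t) ^ (q - 1))
  rw [image_div_one_add_Ioi, integral_rpow_mul_one_sub_rpow hp hq,
    setIntegral_congr_fun measurableSet_Ioi (fun x hx => abs_deriv_smul_comp_div_one_add hx)] at h
  exact h.symm

end Beta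

section Kernel

variable {β : ℝ}

lemma rpow_mul_one_sub_div_one_add_pow_three_eq {u : ℝ} (hu : 0 < u) :
    u ^ β * (1 - u) / (1 + u) ^ 3
      = 2 * (u ^ ((β + 1) - 1) * (1 + u) ^ (-((β + 1) + (2 - β))))
        - u ^ ((β + 1) - 1) * (1 + u) ^ (-((β + 1) + (1 - β))) := by
  have h1u : 0 < 1 + u := by linarith
  rw [add_sub_cancel_right, show -((β + 1) + (2 - β)) = -((3 : ℕ) : ℝ) by push_cast; ring,
    show -((β + 1) + (1 - β)) = -((2 : ℕ) : ℝ) by push_cast; ring,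
    rpow_neg h1u.le, rpow_neg h1u.le, rpow_natCast, rpow_natCast]
  field_simp
  ring

lemma integrableOn_Ioi_rpow_mul_one_sub_div_one_add_pow_three (h0 : 0 < β) (h1 : β < 1) :
    IntegrableOn (fun u : ℝ => u ^ β * (1 - u) / (1 + u) ^ 3) (Ioi 0) := by
  have hJ₃ := integrableOn_Ioi_rpow_mul_one_add_rpow_neg (p := β + 1) (q := 2 - β)
    (by linarith) (by linarith)
  have hJ₂ := integrableOn_Ioi_rpow_mul_one_add_rpow_neg (p := β + 1) (q := 1 - β)
    (by linarith) (by linarith)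
  exact IntegrableOn.congr_fun ((hJ₃.const_mul 2).sub hJ₂)
    (fun u hu => (rpow_mul_one_sub_div_one_add_pow_three_eq hu).symm) measurableSet_Ioi

lemma integral_Ioi_rpow_mul_one_sub_div_one_add_pow_three (h0 : 0 < β) (h1 : β < 1) :
    ∫ u in Ioi (0 : ℝ), u ^ β * (1 - u) / (1 + u) ^ 3 = -(β ^ 2 * (π / sin (π * β))) := by
  have hJ₃ := integrableOn_Ioi_rpow_mul_one_add_rpow_neg (p := β + 1) (q := 2 - β)
    (by linarith) (by linarith)
  have hJ₂ := integrableOn_Ioi_rpow_mul_one_add_rpow_neg (p := β + 1) (q := 1 - β)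
    (by linarith) (by linarith)
  rw [setIntegral_congr_fun measurableSet_Ioi
      (fun u hu => rpow_mul_one_sub_div_one_add_pow_three_eq hu),
    integral_sub (hJ₃.const_mul 2) hJ₂, integral_const_mul,
    integral_Ioi_rpow_mul_one_add_rpow_neg (by linarith) (by linarith),
    integral_Ioi_rpow_mul_one_add_rpow_neg (by linarith) (by linarith),
    show β + 1 + (2 - β) = 2 + 1 by ring, show β + 1 + (1 - β) = 2 by ring,
    Gamma_add_one two_ne_zero, Gamma_two, Gamma_add_one h0.ne',
    show (2 : ℝ) - β = (1 - β) + 1 by ring, Gamma_add_one (by linarith),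
    ← Gamma_mul_Gamma_one_sub β]
  ring

variable {a : ℝ}

lemma rpow_mul_one_sub_mul_div_eq_rpow_neg_mul {x : ℝ} (ha : 0 < a) (hx : 0 < x) :
    x ^ β * (1 - a * x) / (1 + a * x) ^ 3
      = a ^ (-β) * ((a * x) ^ β * (1 - a * x) / (1 + a * x) ^ 3) := by
  rw [mul_rpow ha.le hx.le, rpow_neg ha.le]
  field_simp [(rpow_pos_of_pos ha β).ne']

lemma integrableOn_Ioi_rpow_mul_one_sub_mul_div_one_add_mul_pow_three (ha : 0 < a)
    (h0 : 0 < β) (h1 : β < 1) :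
    IntegrableOn (fun x : ℝ => x ^ β * (1 - a * x) / (1 + a * x) ^ 3) (Ioi 0) := by
  have h := (integrableOn_Ioi_comp_mul_left_iff
    (fun u : ℝ => u ^ β * (1 - u) / (1 + u) ^ 3) 0 ha).2
    (by simpa using integrableOn_Ioi_rpow_mul_one_sub_div_one_add_pow_three h0 h1)
  exact IntegrableOn.congr_fun (h.const_mul (a ^ (-β)))
    (fun x hx => (rpow_mul_one_sub_mul_div_eq_rpow_neg_mul ha hx).symm) measurableSet_Ioi

lemma integral_Ioi_rpow_mul_one_sub_mul_div_one_add_mul_pow_three (ha : 0 < a)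
    (h0 : 0 < β) (h1 : β < 1) :
    ∫ x in Ioi (0 : ℝ), x ^ β * (1 - a * x) / (1 + a * x) ^ 3
      = -(a ^ (-β) * a⁻¹ * β ^ 2 * (π / sin (π * β))) := by
  rw [setIntegral_congr_fun measurableSet_Ioi
      (fun x hx => rpow_mul_one_sub_mul_div_eq_rpow_neg_mul ha hx),
    integral_const_mul,
    integral_comp_mul_left_Ioi (fun u : ℝ => u ^ β * (1 - u) / (1 + u) ^ 3) 0 ha,
    mul_zero, integral_Ioi_rpow_mul_one_sub_div_one_add_pow_three h0 h1, smul_eq_mul]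
  ring

end Kernel

section Radial

variable {E F : Type*} [NormedAddCommGroup E] [NormedSpace ℝ E] [Nontrivial E]
  [FiniteDimensional ℝ E] [MeasurableSpace E] [BorelSpace E]
  (μ : Measure E) [μ.IsAddHaarMeasure]
  [NormedAddCommGroup F] [NormedSpace ℝ F]

lemma pow_sub_one_eq_rpow_mul_rpow_rpow {n : ℕ} (hn : 1 ≤ n) {c r : ℝ} (hc : 0 < c)
    (hr : 0 < r) :
    r ^ (n - 1) = r ^ (c - 1) * (r ^ c) ^ ((n : ℝ) / c - 1) := by
  rw [← rpow_mul hr.le, ← rpow_add hr, ← rpow_natCast, Nat.cast_sub hn]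
  congr 1
  field_simp
  ring

lemma integrable_comp_norm_rpow_iff {c : ℝ} (hc : 0 < c) (f : ℝ → F) :
    Integrable (fun x => f (‖x‖ ^ c)) μ
      ↔ IntegrableOn (fun y => y ^ ((Module.finrank ℝ E : ℝ) / c - 1) • f y) (Ioi 0) := by
  rw [integrable_fun_norm_addHaar μ (f := fun r => f (r ^ c)),
    ← integrableOn_Ioi_comp_rpow_iff'
      (fun y => y ^ ((Module.finrank ℝ E : ℝ) / c - 1) • f y) hc.ne']
  refine integrableOn_congr_fun (fun r (hr : 0 < r) => ?_) measurableSet_Ioi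
  rw [smul_smul, ← pow_sub_one_eq_rpow_mul_rpow_rpow Module.finrank_pos hc hr]

lemma integral_comp_norm_rpow {c : ℝ} (hc : 0 < c) (f : ℝ → F) :
    ∫ x, f (‖x‖ ^ c) ∂μ = (Module.finrank ℝ E * μ.real (ball 0 1) / c)
      • ∫ y in Ioi 0, y ^ ((Module.finrank ℝ E : ℝ) / c - 1) • f y := by
  set g : ℝ → F := fun y => y ^ ((Module.finrank ℝ E : ℝ) / c - 1) • f y
  have hg : EqOn (fun r => r ^ (Module.finrank ℝ E - 1) • f (r ^ c))
      (fun r => c⁻¹ • ((c * r ^ (c - 1)) • g (r ^ c))) (Ioi 0) := fun r (hr : 0 < r) => by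
    simp only [g]
    rw [smul_smul, smul_smul, ← mul_assoc, inv_mul_cancel₀ hc.ne', one_mul,
      ← pow_sub_one_eq_rpow_mul_rpow_rpow Module.finrank_pos hc hr]
  rw [integral_fun_norm_addHaar μ (fun r => f (r ^ c)), setIntegral_congr_fun measurableSet_Ioi hg,
    integral_smul, integral_comp_rpow_Ioi_of_pos hc, ← Nat.cast_smul_eq_nsmul ℝ, smul_smul,
    smul_smul, div_eq_mul_inv]

end Radial

lemma measureReal_ball_zero_one_fin_two :
    volume.real (ball (0 : EuclideanSpace ℝ (Fin 2)) 1) = π := by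
  simp [measureReal_def, pi_nonneg]

lemma exp_neg_two_mul_log {x : ℝ} (hx : 0 < x) : exp (-2 * log x) = (x ^ 2)⁻¹ := by
  rw [mul_comm, ← rpow_def_of_pos hx, rpow_neg hx.le, rpow_two]

def radialProfile (a x : ℝ) : ℝ :=
  x / 4 * exp (-2 * log (1 + a * x)) * ((1 - a * x) / (1 + a * x))

lemma rpow_sub_one_smul_radialProfile {a s y : ℝ} (ha : 0 ≤ a) (hy : 0 < y) :
    y ^ (s - 1) • radialProfile a y = 4⁻¹ * (y ^ s * (1 - a * y) / (1 + a * y) ^ 3) := by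
  have hX : 0 < 1 + a * y := by positivity
  rw [radialProfile, exp_neg_two_mul_log hX, rpow_sub_one hy.ne', smul_eq_mul]
  field_simp

theorem integral_Lam1_general (α V0 : ℝ) (hα : 0 < α) (hV0 : 0 < V0) :
    Integrable (fun y : R2 => ‖y‖ ^ (2 + 2 * α) / 4 * Real.exp (U2 α V0 y) * f2 α V0 y)
    ∧ (∫ y : R2, ‖y‖ ^ (2 + 2 * α) / 4 * Real.exp (U2 α V0 y) * f2 α V0 y)
        = 2 * π * Lam1 α V0 := by
  set a := aconst α V0 with ha_def
  have ha : 0 < a := by unfold a aconst; positivity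
  have hc : 0 < 2 + 2 * α := by linarith
  have hβ0 : 0 < 2 / (2 + 2 * α) := by positivity
  have hβ1 : 2 / (2 + 2 * α) < 1 := by rw [div_lt_one hc]; linarith
  have hF : (fun y : R2 => ‖y‖ ^ (2 + 2 * α) / 4 * Real.exp (U2 α V0 y) * f2 α V0 y)
      = fun y => radialProfile a (‖y‖ ^ (2 + 2 * α)) := by
    simp only [radialProfile, U2, f2, ← ha_def, show 2 * α + 2 = 2 + 2 * α by ring]
  have hw := fun y (hy : y ∈ Ioi (0 : ℝ)) =>
    rpow_sub_one_smul_radialProfile (a := a) (s := 2 / (2 + 2 * α)) ha.le hy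
  rw [hF, integrable_comp_norm_rpow_iff volume hc, integral_comp_norm_rpow volume hc,
    finrank_euclideanSpace_fin, Nat.cast_ofNat, integrableOn_congr_fun hw measurableSet_Ioi,
    setIntegral_congr_fun measurableSet_Ioi hw, integral_const_mul,
    integral_Ioi_rpow_mul_one_sub_mul_div_one_add_mul_pow_three ha hβ0 hβ1,
    measureReal_ball_zero_one_fin_two]
  refine ⟨(integrableOn_Ioi_rpow_mul_one_sub_mul_div_one_add_mul_pow_three ha hβ0 hβ1).const_mul
    _, ?_⟩
  have hβ : 2 / (2 + 2 * α) = 1 / (1 + α) := by field_simp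
  have ha_inv : a⁻¹ = 8 * (1 + α) ^ 2 / V0 := inv_div _ _
  rw [hβ, rpow_neg ha.le, ← inv_rpow ha.le, ha_inv, Lam1, mul_one_div, smul_eq_mul]
  field_simp
  ring

/-- `∫_{ℝ²} (|y|^{2+2α}/4) e^{U} f dy = 2π Λ₁`. -/
theorem integral_Lam1 (α V0 : ℝ) (hα : 0 < α) (hα_notnat : ∀ n : ℕ, α ≠ (n : ℝ))
    (hV0 : 0 < V0) :
    Integrable (fun y : R2 => ‖y‖ ^ (2 + 2 * α) / 4 * Real.exp (U2 α V0 y) * f2 α V0 y)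
    ∧ (∫ y : R2, ‖y‖ ^ (2 + 2 * α) / 4 * Real.exp (U2 α V0 y) * f2 α V0 y)
        = 2 * π * Lam1 α V0 :=
  integral_Lam1_general α V0 hα hV0
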